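/- For X with standard logistic density, E[|X|·e^{-X}/(1+e^{-X})^2] = (log 2)/3 − 1/12; equivalently, ∫_{-∞}^{∞} |x|·e^{-2x}/(1+e^{-x})^4 dx = (log 2)/3 − 1/12. -/

import Mathlib

/-!
Write `σ` for the sigmoid and `p = σ' = σ (1 - σ)` for the logistic density, so that the
integrand is `|x| p(x)²`. Since `σ (-x) = 1 - σ x`, `p` is even and the integral is
`2 ∫₀^∞ x p(x)² dx`. In the variable `s = σ x` one has `p² dx = s (1 - s) ds`, whose primitive
vanishing at `s = 1` is `H s = -(1 - s)² (1 + 2 s) / 6`; integrating by parts,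
`x H(σ x) + (log σ x + σ x - (σ x)²) / 6` is a primitive of `x p(x)²` that tends to `0` at `+∞`
and equals `(1/4 - log 2) / 6` at `0`.
-/

open MeasureTheory Set Filter Topology

namespace Real

noncomputable def logisticDensity (x : ℝ) : ℝ := sigmoid x * (1 - sigmoid x)

lemma logisticDensity_eq (x : ℝ) : logisticDensity x = exp (-x) / (1 + exp (-x)) ^ 2 := by
  rw [logisticDensity, ← sigmoid_neg, ← sigmoid_mul_rexp_neg, sigmoid_def]
  field_simp

lemma logisticDensity_neg (x : ℝ) : logisticDensity (-x) = logisticDensity x := by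
  rw [logisticDensity, logisticDensity, sigmoid_neg]
  ring

lemma logisticDensity_abs (x : ℝ) : logisticDensity |x| = logisticDensity x := by
  rcases abs_choice x with h | h <;> rw [h]
  exact logisticDensity_neg x

noncomputable def logisticSqMomentPrimitive (x : ℝ) : ℝ :=
  -x * (1 - sigmoid x) ^ 2 * (1 + 2 * sigmoid x) / 6
    + (log (sigmoid x) + sigmoid x - sigmoid x ^ 2) / 6

lemma hasDerivAt_logisticSqMomentPrimitive (x : ℝ) :
    HasDerivAt logisticSqMomentPrimitive (x * logisticDensity x ^ 2) x := by
  have hσ := hasDerivAt_sigmoid x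
  have hσ_ne : sigmoid x ≠ 0 := (sigmoid_pos x).ne'
  have h := ((((hasDerivAt_id' x).neg.mul ((hσ.const_sub 1).pow 2)).mul
    ((hσ.const_mul 2).const_add 1)).div_const 6).add
    ((((hσ.log hσ_ne).add hσ).sub (hσ.pow 2)).div_const 6)
  refine h.congr_deriv ?_
  simp only [Pi.mul_apply, Pi.pow_apply, Pi.neg_apply, logisticDensity]
  field_simp
  ring

lemma tendsto_logisticSqMomentPrimitive_atTop :
    Tendsto logisticSqMomentPrimitive atTop (𝓝 0) := by
  have hσ := tendsto_sigmoid_atTop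
  have hxexp : Tendsto (fun x : ℝ => x * exp (-x)) atTop (𝓝 0) := by
    simpa using tendsto_pow_mul_exp_neg_atTop_nhds_zero 1
  have hfirst : Tendsto (fun x => -(x * exp (-x)) * sigmoid x * (1 - sigmoid x)
      * (1 + 2 * sigmoid x) / 6) atTop (𝓝 (-0 * 1 * (1 - 1) * (1 + 2 * 1) / 6)) :=
    ((((hxexp.neg.mul hσ).mul (hσ.const_sub 1)).mul
      ((hσ.const_mul 2).const_add 1)).div_const 6)
  have hsecond : Tendsto (fun x => (log (sigmoid x) + sigmoid x - sigmoid x ^ 2) / 6) atTop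
      (𝓝 ((log 1 + 1 - 1 ^ 2) / 6)) :=
    ((((continuousAt_log one_ne_zero).tendsto.comp hσ).add hσ).sub (hσ.pow 2)).div_const 6
  convert hfirst.add hsecond using 1
  · ext x
    have hσ_compl : 1 - sigmoid x = sigmoid x * exp (-x) := by
      rw [sigmoid_mul_rexp_neg, sigmoid_neg]
    rw [logisticSqMomentPrimitive, sq, hσ_compl]
    ring
  · simp

lemma logisticSqMomentPrimitive_zero : logisticSqMomentPrimitive 0 = (1 / 4 - log 2) / 6 := by
  rw [logisticSqMomentPrimitive, sigmoid_zero, log_inv]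
  ring

lemma integral_Ioi_mul_logisticDensity_sq :
    ∫ x in Ioi (0 : ℝ), x * logisticDensity x ^ 2 = log 2 / 6 - 1 / 24 := by
  rw [integral_Ioi_of_hasDerivAt_of_nonneg'
    (fun x _ => hasDerivAt_logisticSqMomentPrimitive x)
    (fun x hx => mul_nonneg (le_of_lt hx) (sq_nonneg _))
    tendsto_logisticSqMomentPrimitive_atTop, logisticSqMomentPrimitive_zero]
  ring

end Real

open Real

theorem logistic_abs_moment_one :
    ∫ x : ℝ, |x| * Real.exp (-2*x) / (1 + Real.exp (-x))^4 = Real.log 2 / 3 - 1/12 := by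
  have hintegrand : ∀ x : ℝ, |x| * exp (-2 * x) / (1 + exp (-x)) ^ 4
      = |x| * logisticDensity |x| ^ 2 := by
    intro x
    have hsq : exp (-2 * x) = exp (-x) ^ 2 := by rw [← exp_nat_mul]; ring_nf
    rw [logisticDensity_abs, logisticDensity_eq, hsq]
    field_simp
  simp_rw [hintegrand]
  rw [integral_comp_abs (f := fun x => x * logisticDensity x ^ 2),
    integral_Ioi_mul_logisticDensity_sq]
  ring
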